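/- arXiv:chao-dyn/9906035 — 4 statements merged into one kernel-verified Lean document; each statement's English description precedes it below -/
import Mathlib

section
/- The value function satisfies Bellman's dynamic programming principle: for all s < r < t and all x, y ∈ ℝ, L(s,y;t,x) = inf_{z ∈ ℝ} (L(s,y;r,z) + L(r,z;t,x)). -/
open MeasureTheory

/-- An admissible trajectory from `(s,y)` to `(t,x)`: `ξ` is absolutely continuous on
`[s,t]` with (a.e.) derivative `g`, i.e. `ξ r = y + ∫_s^r g` on `[s,t]`, `g` being
interval integrable, and `ξ t = x` (so also `ξ s = y`). -/
def Admissible (s y t x : ℝ) (ξ g : ℝ → ℝ) : Prop :=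
  IntervalIntegrable g volume s t ∧
  (∀ r ∈ Set.Icc s t, ξ r = y + ∫ τ in s..r, g τ) ∧ ξ t = x

/-- The value function `L(s,y;t,x)`: the infimum of the action
`∫_s^t [L₀(ξ'(τ)) − U(τ,ξ(τ))] dτ` over admissible trajectories from `(s,y)` to `(t,x)`. -/
noncomputable def val (L0 : ℝ → ℝ) (U : ℝ → ℝ → ℝ) (s y t x : ℝ) : ℝ :=
  sInf { A | ∃ ξ g : ℝ → ℝ, Admissible s y t x ξ g ∧
    IntervalIntegrable (fun τ => L0 (g τ) - U τ (ξ τ)) volume s t ∧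
    A = ∫ τ in s..t, (L0 (g τ) - U τ (ξ τ)) }

/-!
Cutting an admissible trajectory at time `r` yields trajectories `(s,y) → (r,ξ r)` and
`(r,ξ r) → (t,x)` whose actions add up, and conversely two trajectories meeting at `(r,z)` glue
to one from `(s,y)` to `(t,x)`. So the set of actions from `(s,y)` to `(t,x)` is the union over
`z` of the sumsets of the two partial action sets, and the infimum of a union of sumsets is the
infimum over `z` of the sums of infima. This needs every action set to be nonempty (straight
lines) and bounded below (`L₀` is coercive, hence bounded below, and `U` is bounded above).
-/

open Filter Set intervalIntegral
open scoped Pointwise Interval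

lemma csInf_iUnion {α ι : Type*} [ConditionallyCompleteLattice α] [Nonempty ι] {S : ι → Set α}
    (hne : ∀ i, (S i).Nonempty) (hbdd : BddBelow (⋃ i, S i)) :
    sInf (⋃ i, S i) = ⨅ i, sInf (S i) := by
  obtain ⟨b, hb⟩ := hbdd
  have hbdd_range : BddBelow (range fun i => sInf (S i)) := by
    refine ⟨b, forall_mem_range.2 fun i => le_csInf (hne i) fun a ha => hb ?_⟩
    exact mem_iUnion_of_mem i ha
  refine le_antisymm (le_ciInf fun i => csInf_le_csInf ⟨b, hb⟩ (hne i) (subset_iUnion S i)) ?_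
  refine le_csInf ((hne (Classical.arbitrary ι)).mono (subset_iUnion S _)) ?_
  intro a ha
  obtain ⟨i, hi⟩ := mem_iUnion.1 ha
  exact ciInf_le_of_le hbdd_range i (csInf_le ⟨b, fun a ha => hb (subset_iUnion S i ha)⟩ hi)

lemma tendsto_cocompact_atTop_of_superlinear {f : ℝ → ℝ}
    (hf : ∀ N > (0 : ℝ), ∃ P > (0 : ℝ), ∀ v : ℝ, P < |v| → N * |v| < f v) :
    Tendsto f (cocompact ℝ) atTop := by
  obtain ⟨P, -, hP⟩ := hf 1 one_pos
  rw [← Metric.cobounded_eq_cocompact, ← comap_norm_atTop, tendsto_atTop]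
  intro b
  filter_upwards [(eventually_gt_atTop (max P b)).comap norm] with v hv
  rw [Real.norm_eq_abs, max_lt_iff] at hv
  linarith [hP v hv.1]

section Piecewise

variable {f g : ℝ → ℝ} {r : ℝ}

-- Cutting with `τ ≤ r` matches the left-open intervals `Ι` of interval integrals exactly.
lemma eqOn_ite_le_left {a b : ℝ} (hab : a ≤ b) (hbr : b ≤ r) :
    EqOn (fun τ => if τ ≤ r then f τ else g τ) f (Ι a b) := by
  intro u hu
  rw [uIoc_of_le hab] at hu
  exact if_pos (hu.2.trans hbr)

lemma eqOn_ite_le_right {b : ℝ} (hrb : r ≤ b) :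
    EqOn (fun τ => if τ ≤ r then f τ else g τ) g (Ι r b) := by
  intro u hu
  rw [uIoc_of_le hrb] at hu
  exact if_neg (not_le.2 hu.1)

variable {s t : ℝ}

lemma IntervalIntegrable.ite_le (hsr : s ≤ r) (hrt : r ≤ t)
    (hf : IntervalIntegrable f volume s r) (hg : IntervalIntegrable g volume r t) :
    IntervalIntegrable (fun τ => if τ ≤ r then f τ else g τ) volume s t :=
  ((intervalIntegrable_congr (eqOn_ite_le_left hsr le_rfl)).2 hf).trans
    ((intervalIntegrable_congr (eqOn_ite_le_right hrt)).2 hg)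

lemma integral_ite_le (hsr : s ≤ r) (hrt : r ≤ t)
    (hf : IntervalIntegrable f volume s r) (hg : IntervalIntegrable g volume r t) :
    ∫ τ in s..t, (if τ ≤ r then f τ else g τ) = (∫ τ in s..r, f τ) + ∫ τ in r..t, g τ := by
  rw [← integral_add_adjacent_intervals
    ((intervalIntegrable_congr (eqOn_ite_le_left hsr le_rfl)).2 hf)
    ((intervalIntegrable_congr (eqOn_ite_le_right hrt)).2 hg)]
  congr 1
  · exact integral_congr_ae (.of_forall fun u hu => eqOn_ite_le_left hsr le_rfl hu)
  · exact integral_congr_ae (.of_forall fun u hu => eqOn_ite_le_right hrt hu)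

end Piecewise

namespace Admissible

variable {s r t y x : ℝ} {ξ g : ℝ → ℝ}

lemma restrict_left (h : Admissible s y t x ξ g) (hsr : s ≤ r) (hrt : r ≤ t) :
    Admissible s y r (ξ r) ξ g :=
  ⟨h.1.mono_set (uIcc_subset_uIcc_left (mem_uIcc_of_le hsr hrt)),
    fun τ hτ => h.2.1 τ ⟨hτ.1, hτ.2.trans hrt⟩, rfl⟩

lemma restrict_right (h : Admissible s y t x ξ g) (hsr : s ≤ r) (hrt : r ≤ t) :
    Admissible r (ξ r) t x ξ g := by
  refine ⟨h.1.mono_set (uIcc_subset_uIcc_right (mem_uIcc_of_le hsr hrt)), fun τ hτ => ?_, h.2.2⟩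
  have hgsr := h.1.mono_set (uIcc_subset_uIcc_left (mem_uIcc_of_le hsr hrt))
  have hgrτ := h.1.mono_set (uIcc_subset_uIcc (mem_uIcc_of_le hsr hrt)
    (mem_uIcc_of_le (hsr.trans hτ.1) hτ.2))
  rw [h.2.1 τ ⟨hsr.trans hτ.1, hτ.2⟩, h.2.1 r ⟨hsr, hrt⟩,
    ← integral_add_adjacent_intervals hgsr hgrτ, add_assoc]

lemma concat {z : ℝ} {ξ₁ g₁ ξ₂ g₂ : ℝ → ℝ} (h₁ : Admissible s y r z ξ₁ g₁)
    (h₂ : Admissible r z t x ξ₂ g₂) (hsr : s ≤ r) (hrt : r < t) :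
    Admissible s y t x (fun τ => if τ ≤ r then ξ₁ τ else ξ₂ τ)
      (fun τ => if τ ≤ r then g₁ τ else g₂ τ) := by
  refine ⟨h₁.1.ite_le hsr hrt.le h₂.1, fun τ hτ => ?_, (if_neg (not_le.2 hrt)).trans h₂.2.2⟩
  dsimp only
  by_cases hτr : τ ≤ r
  · rw [if_pos hτr, h₁.2.1 τ ⟨hτ.1, hτr⟩]
    exact congrArg (y + ·) (integral_congr_ae (.of_forall fun u hu =>
      (eqOn_ite_le_left hτ.1 hτr hu).symm))
  · rw [not_le] at hτr
    have hz : z = y + ∫ u in s..r, g₁ u := h₁.2.2 ▸ h₁.2.1 r ⟨hsr, le_rfl⟩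
    rw [if_neg (not_le.2 hτr), h₂.2.1 τ ⟨hτr.le, hτ.2⟩,
      integral_ite_le hsr hτr.le h₁.1 (h₂.1.mono_set (uIcc_subset_uIcc_left
        (mem_uIcc_of_le hτr.le hτ.2))), hz, add_assoc]

end Admissible

def actionSet (L0 : ℝ → ℝ) (U : ℝ → ℝ → ℝ) (s y t x : ℝ) : Set ℝ :=
  { A | ∃ ξ g : ℝ → ℝ, Admissible s y t x ξ g ∧
    IntervalIntegrable (fun τ => L0 (g τ) - U τ (ξ τ)) volume s t ∧
    A = ∫ τ in s..t, (L0 (g τ) - U τ (ξ τ)) }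

lemma val_eq_sInf_actionSet (L0 : ℝ → ℝ) (U : ℝ → ℝ → ℝ) (s y t x : ℝ) :
    val L0 U s y t x = sInf (actionSet L0 U s y t x) := rfl

section actionSet

variable {L0 : ℝ → ℝ} {U : ℝ → ℝ → ℝ} {s r t y x : ℝ}

lemma bddBelow_actionSet {m K : ℝ} (hL0 : ∀ v, m ≤ L0 v) (hU : ∀ t x, U t x ≤ K)
    (hst : s ≤ t) : BddBelow (actionSet L0 U s y t x) := by
  refine ⟨(m - K) * (t - s), ?_⟩
  rintro _ ⟨ξ, g, -, hint, rfl⟩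
  calc (m - K) * (t - s) = ∫ _ in s..t, (m - K) := by
        rw [intervalIntegral.integral_const, smul_eq_mul, mul_comm]
    _ ≤ _ := integral_mono_on hst intervalIntegrable_const hint fun τ _ =>
      sub_le_sub (hL0 (g τ)) (hU τ (ξ τ))

lemma actionSet_nonempty (hU : Continuous fun q : ℝ × ℝ => U q.1 q.2) (hst : s < t) :
    (actionSet L0 U s y t x).Nonempty := by
  set c := (x - y) / (t - s)
  refine ⟨_, fun τ => y + c * (τ - s), fun _ => c,
    ⟨intervalIntegrable_const, fun τ _ => by simp [mul_comm], ?_⟩, ?_, rfl⟩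
  · simp only [c]
    field_simp [(sub_pos.2 hst).ne']
    ring
  · have hline : Continuous fun τ => U τ (y + c * (τ - s)) :=
      hU.comp (f := fun τ => (τ, y + c * (τ - s))) (by fun_prop)
    exact (continuous_const.sub hline).intervalIntegrable _ _

lemma add_mem_actionSet {z a b : ℝ} (hsr : s ≤ r) (hrt : r < t)
    (ha : a ∈ actionSet L0 U s y r z) (hb : b ∈ actionSet L0 U r z t x) :
    a + b ∈ actionSet L0 U s y t x := by
  obtain ⟨ξ₁, g₁, h₁, hint₁, rfl⟩ := ha
  obtain ⟨ξ₂, g₂, h₂, hint₂, rfl⟩ := hb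
  have hF : (fun τ => L0 ((fun τ => if τ ≤ r then g₁ τ else g₂ τ) τ) -
      U τ ((fun τ => if τ ≤ r then ξ₁ τ else ξ₂ τ) τ)) =
      fun τ => if τ ≤ r then L0 (g₁ τ) - U τ (ξ₁ τ) else L0 (g₂ τ) - U τ (ξ₂ τ) := by
    ext τ
    by_cases hτ : τ ≤ r <;> simp only [hτ, if_true, if_false]
  refine ⟨_, _, h₁.concat h₂ hsr hrt, ?_, ?_⟩
  · rw [hF]; exact hint₁.ite_le hsr hrt.le hint₂
  · rw [hF, integral_ite_le hsr hrt.le hint₁ hint₂]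

lemma actionSet_eq_iUnion_add (hsr : s ≤ r) (hrt : r < t) :
    actionSet L0 U s y t x = ⋃ z, actionSet L0 U s y r z + actionSet L0 U r z t x := by
  refine Subset.antisymm ?_ (iUnion_subset fun z => ?_)
  · rintro _ ⟨ξ, g, h, hint, rfl⟩
    have hsub₁ := uIcc_subset_uIcc_left (mem_uIcc_of_le hsr hrt.le)
    have hsub₂ := uIcc_subset_uIcc_right (mem_uIcc_of_le hsr hrt.le)
    refine mem_iUnion.2 ⟨ξ r, _, ⟨ξ, g, h.restrict_left hsr hrt.le, hint.mono_set hsub₁, rfl⟩,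
      _, ⟨ξ, g, h.restrict_right hsr hrt.le, hint.mono_set hsub₂, rfl⟩, ?_⟩
    exact integral_add_adjacent_intervals (hint.mono_set hsub₁) (hint.mono_set hsub₂)
  · rintro _ ⟨a, ha, b, hb, rfl⟩
    exact add_mem_actionSet hsr hrt ha hb

end actionSet

theorem val_bellman_general
    (L0 : ℝ → ℝ) (U : ℝ → ℝ → ℝ)
    (hL0cont : Continuous L0)
    (hL0sup : ∀ N > (0 : ℝ), ∃ P > (0 : ℝ), ∀ v : ℝ, P < |v| → N * |v| < L0 v)
    (hUcont : Continuous fun q : ℝ × ℝ => U q.1 q.2)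
    (hUbdd : ∃ K : ℝ, ∀ t x : ℝ, |U t x| ≤ K) :
    ∀ s r t x y : ℝ, s < r → r < t →
      val L0 U s y t x = sInf { c | ∃ z : ℝ, c = val L0 U s y r z + val L0 U r z t x } := by
  intro s r t x y hsr hrt
  obtain ⟨v₀, hv₀⟩ := hL0cont.exists_forall_le (tendsto_cocompact_atTop_of_superlinear hL0sup)
  obtain ⟨K, hK⟩ := hUbdd
  have hbdd {s t y x : ℝ} (hst : s ≤ t) : BddBelow (actionSet L0 U s y t x) :=
    bddBelow_actionSet hv₀ (fun t x => (le_abs_self _).trans (hK t x)) hst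
  have hne {s t y x : ℝ} (hst : s < t) : (actionSet L0 U s y t x).Nonempty :=
    actionSet_nonempty hUcont hst
  calc val L0 U s y t x
      = sInf (⋃ z, actionSet L0 U s y r z + actionSet L0 U r z t x) := by
        rw [val_eq_sInf_actionSet, actionSet_eq_iUnion_add hsr.le hrt]
    _ = ⨅ z, (val L0 U s y r z + val L0 U r z t x) := by
        rw [csInf_iUnion (fun z => (hne hsr).add (hne hrt))
          (actionSet_eq_iUnion_add hsr.le hrt ▸ hbdd (hsr.trans hrt).le)]
        exact iInf_congr fun z => csInf_add (hne hsr) (hbdd hsr.le) (hne hrt) (hbdd hrt.le)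
    _ = sInf { c | ∃ z : ℝ, c = val L0 U s y r z + val L0 U r z t x } :=
        congrArg sInf (ext fun _ => exists_congr fun _ => eq_comm)

/-- Bellman's dynamic programming principle: for all `s < r < t`,
`L(s,y;t,x) = inf_z (L(s,y;r,z) + L(r,z;t,x))`. -/
theorem val_bellman
    (L0 : ℝ → ℝ) (U : ℝ → ℝ → ℝ)
    (hL0cont : Continuous L0) (hL0conv : ConvexOn ℝ Set.univ L0)
    (hL0sup : ∀ N > (0 : ℝ), ∃ P > (0 : ℝ), ∀ v : ℝ, P < |v| → N * |v| < L0 v)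
    (hUcont : Continuous fun q : ℝ × ℝ => U q.1 q.2)
    (hUbdd : ∃ K : ℝ, ∀ t x : ℝ, |U t x| ≤ K) :
    ∀ s r t x y : ℝ, s < r → r < t →
      val L0 U s y t x = sInf { c | ∃ z : ℝ, c = val L0 U s y r z + val L0 U r z t x } :=
  val_bellman_general L0 U hL0cont hL0sup hUcont hUbdd
end

section
/- For a C¹ convex function L₀ with strictly increasing derivative, the affine trajectory ξ̂(τ) = y·(t−τ)/(t−s) + x·(τ−s)/(t−s) minimizes the functional ξ ↦ ∫ₛᵗ L₀(ξ'(τ)) dτ over absolutely continuous ξ:[s,t] → ℝ with ξ(s) = y, ξ(t) = x, and the minimal value equals (t−s)·L₀((x−y)/(t−s)). -/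
/-!
The boundary values force the average of `ξ'` over `[s, t]` to be the slope `(x - y) / (t - s)`,
so Jensen's inequality (a convex function on `ℝ` is automatically continuous) bounds the action
below by `(t - s) * L₀ (slope)`. The affine trajectory has constant derivative equal to the slope
and attains the bound.
-/
open MeasureTheory

open Set Interval

theorem ConvexOn.map_interval_average_le {φ g : ℝ → ℝ} {a b : ℝ} (hφ : ConvexOn ℝ univ φ)
    (hab : a ≠ b) (hg : IntervalIntegrable g volume a b)
    (hφg : IntervalIntegrable (φ ∘ g) volume a b) :
    φ (⨍ τ in a..b, g τ) ≤ ⨍ τ in a..b, φ (g τ) := by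
  have hvol : volume (Ι a b) = ENNReal.ofReal |b - a| := Real.volume_uIoc
  refine hφ.map_set_average_le (hφ.continuousOn isOpen_univ) isClosed_univ ?_ ?_
    (.of_forall fun _ => mem_univ _) hg.def' hφg.def'
  · simpa [hvol, sub_eq_zero] using hab.symm
  · simp [hvol]

theorem ConvexOn.mul_map_div_le_intervalIntegral {φ g : ℝ → ℝ} {a b : ℝ}
    (hφ : ConvexOn ℝ univ φ) (hab : a < b) (hg : IntervalIntegrable g volume a b)
    (hφg : IntervalIntegrable (φ ∘ g) volume a b) :
    (b - a) * φ ((∫ τ in a..b, g τ) / (b - a)) ≤ ∫ τ in a..b, φ (g τ) := by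
  have hba : 0 < b - a := sub_pos.mpr hab
  have h := hφ.map_interval_average_le hab.ne hg hφg
  rw [interval_average_eq, interval_average_eq, smul_eq_mul, smul_eq_mul, inv_mul_eq_div,
    inv_mul_eq_div, le_div_iff₀ hba] at h
  linarith

theorem Admissible.intervalIntegral_eq {s y t x : ℝ} {ξ g : ℝ → ℝ} (hst : s ≤ t)
    (h : Admissible s y t x ξ g) : ∫ τ in s..t, g τ = x - y := by
  obtain ⟨-, hξ, hξt⟩ := h
  linarith [hξ t ⟨hst, le_rfl⟩]

theorem admissible_affine {s t : ℝ} (hst : s ≠ t) (y x : ℝ) :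
    Admissible s y t x (fun τ => y * (t - τ) / (t - s) + x * (τ - s) / (t - s))
      (fun _ => (x - y) / (t - s)) := by
  have hts : t - s ≠ 0 := sub_ne_zero.mpr hst.symm
  refine ⟨intervalIntegrable_const, fun r _ => ?_, ?_⟩
  · rw [intervalIntegral.integral_const, smul_eq_mul]
    field_simp
    ring
  · field_simp
    ring

theorem affine_minimizes_general
    (L0 : ℝ → ℝ) (s t y x : ℝ) (hst : s < t)
    (hL0conv : ConvexOn ℝ Set.univ L0) :
    (Admissible s y t x (fun τ => y * (t - τ) / (t - s) + x * (τ - s) / (t - s))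
        (fun _ => (x - y) / (t - s)) ∧
      (∫ τ in s..t, L0 ((fun _ : ℝ => (x - y) / (t - s)) τ)) =
        (t - s) * L0 ((x - y) / (t - s))) ∧
    ∀ ξ g : ℝ → ℝ, Admissible s y t x ξ g →
      IntervalIntegrable (fun τ => L0 (g τ)) volume s t →
      (t - s) * L0 ((x - y) / (t - s)) ≤ ∫ τ in s..t, L0 (g τ) := by
  refine ⟨⟨admissible_affine hst.ne y x, by simp⟩, fun ξ g hξ hL0g => ?_⟩
  have h := hL0conv.mul_map_div_le_intervalIntegral hst hξ.1 hL0g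
  rwa [hξ.intervalIntegral_eq hst.le] at h

/-- For a C¹ convex `L₀` with strictly increasing derivative, the affine
trajectory `ξ̂(τ) = y(t−τ)/(t−s) + x(τ−s)/(t−s)` minimizes `ξ ↦ ∫ₛᵗ L₀(ξ'(τ)) dτ`
over admissible trajectories from `(s,y)` to `(t,x)`, with minimal value
`(t−s)·L₀((x−y)/(t−s))`. -/
theorem affine_minimizes
    (L0 : ℝ → ℝ) (s t y x : ℝ) (hst : s < t)
    (hL0 : ContDiff ℝ 1 L0) (hL0conv : ConvexOn ℝ Set.univ L0)
    (hL0mono : StrictMono (deriv L0)) :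
    (Admissible s y t x (fun τ => y * (t - τ) / (t - s) + x * (τ - s) / (t - s))
        (fun _ => (x - y) / (t - s)) ∧
      (∫ τ in s..t, L0 ((fun _ : ℝ => (x - y) / (t - s)) τ)) =
        (t - s) * L0 ((x - y) / (t - s))) ∧
    ∀ ξ g : ℝ → ℝ, Admissible s y t x ξ g →
      IntervalIntegrable (fun τ => L0 (g τ)) volume s t →
      (t - s) * L0 ((x - y) / (t - s)) ≤ ∫ τ in s..t, L0 (g τ) :=
  affine_minimizes_general L0 s t y x hst hL0conv
end

section
/- Let Hₙ(a) = max_{(y,x)} (−n⁻¹ Lᵃₙ(y,x)). Then the sequence n·Hₙ(a) is approximately superadditive/subadditive: |n·Hₙ(a) − n₀·H_{n₀}(a) − (n−n₀)·H_{n−n₀}(a)| ≤ C*(a) for all 0 < n₀ < n, and consequently Hₙ(a) converges to a limit H(a) with |Hₙ(a) − H(a)| ≤ C*(a)/n. -/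
open MeasureTheory

/-- The reduced `n`-step action `Lᵃₙ(y,x) = min_{k ∈ ℤ} (L(0,y+k;n,x) + a(y+k−x))`. -/
noncomputable def Lan (L0 : ℝ → ℝ) (U : ℝ → ℝ → ℝ) (a : ℝ) (n : ℕ) (y x : ℝ) : ℝ :=
  sInf { c | ∃ k : ℤ, c = val L0 U 0 (y + k) n x + a * (y + k - x) }

/-- `Hₙ(a) = max_{(y,x)} (−n⁻¹ Lᵃₙ(y,x))`. -/
noncomputable def Hn (L0 : ℝ → ℝ) (U : ℝ → ℝ → ℝ) (a : ℝ) (n : ℕ) : ℝ :=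
  sSup { h | ∃ y x : ℝ, h = -(1 / (n : ℝ)) * Lan L0 U a n y x }

/-!
Put `Jₙ = inf_{y,x} Lᵃₙ(y,x)`, so that `n Hₙ(a) = -Jₙ`. Splitting a near-optimal trajectory of
`n₀ + n'` steps at time `n₀` gives `J_{n₀} + J_{n'} ≤ J_{n₀+n'}`. Conversely, after an integer
translation (harmless by periodicity of `U`) a near-optimal `n'`-step trajectory starts within
distance `1` of the endpoint of a near-optimal `n₀`-step one; moving that endpoint costs at most
`C*(a)` by the Lipschitz bound, and concatenating gives `J_{n₀+n'} ≤ J_{n₀} + J_{n'} + C*(a)`.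
Fekete's lemma for the subadditive sequences `C*(a) ∓ n Hₙ(a)` then yields the limit and the rate.
The Fenchel inequality `L₀(v) ≥ a v - H₀(a)` and the boundedness of `U` keep every infimum finite.
-/

open Set Filter Topology intervalIntegral

lemma Subadditive.bddBelow_div_of_le_add {u v : ℕ → ℝ} (hv : Subadditive v)
    (huv : ∀ n, v 0 ≤ u n + v n) : BddBelow (range fun n => u n / n) := by
  refine ⟨min 0 (-v 1), forall_mem_range.2 fun n => ?_⟩
  rcases Nat.eq_zero_or_pos n with rfl | hn
  · simp
  have hvn : v n ≤ n * v 1 + v 0 := by simpa using hv.apply_mul_add_le n 1 0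
  rw [le_div_iff₀ (by exact_mod_cast hn)]
  nlinarith [min_le_right 0 (-v 1), huv n]

theorem exists_abs_div_sub_le_of_abs_add_sub_le {f : ℕ → ℝ} {C : ℝ}
    (h : ∀ m n, |f (m + n) - f m - f n| ≤ C) :
    ∃ L, ∀ n, 0 < n → |f n / n - L| ≤ C / n := by
  have hf0 : |f 0| ≤ C := by simpa [abs_neg] using h 0 0
  set u : ℕ → ℝ := fun n => C - f n
  set v : ℕ → ℝ := fun n => C + f n
  have hu : Subadditive u := fun m n => by
    have := (abs_le.mp (h m n)).1
    simp only [u]; linarith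
  have hv : Subadditive v := fun m n => by
    have := (abs_le.mp (h m n)).2
    simp only [v]; linarith
  have hub := hv.bddBelow_div_of_le_add (u := u) fun n => by
    simp only [u, v]; linarith [(abs_le.mp hf0).2]
  have hvb := hu.bddBelow_div_of_le_add (u := v) fun n => by
    simp only [u, v]; linarith [(abs_le.mp hf0).1]
  -- `u n / n + v n / n = 2C / n → 0`, so the two Fekete limits cancel
  have hlim : hu.lim + hv.lim = 0 := by
    refine tendsto_nhds_unique ((hu.tendsto_lim hub).add (hv.tendsto_lim hvb)) ?_
    refine (tendsto_const_div_atTop_nhds_zero_nat (2 * C)).congr' ?_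
    filter_upwards [eventually_ne_atTop 0] with n hn
    simp only [u, v]
    field_simp
    ring
  refine ⟨hv.lim, fun n hn => abs_sub_le_iff.2 ⟨?_, ?_⟩⟩
  · have := hu.lim_le_div hub hn.ne'
    simp only [u, sub_div] at this
    linarith
  · have := hv.lim_le_div hvb hn.ne'
    simp only [v, add_div] at this
    linarith

lemma bddAbove_range_mul_sub {H : ℝ → ℝ} (hH : Continuous H)
    (hsup : ∀ N > (0 : ℝ), ∃ P > (0 : ℝ), ∀ p : ℝ, P < |p| → N * |p| < H p) (v : ℝ) :
    BddAbove (range fun p => p * v - H p) := by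
  obtain ⟨P, -, hP⟩ := hsup (|v| + 1) (by positivity)
  have hlim : Tendsto (fun p => p * v - H p) (cocompact ℝ) atBot := by
    refine tendsto_atBot_mono' _ ?_ (tendsto_neg_atTop_atBot.comp tendsto_norm_cocompact_atTop)
    filter_upwards [tendsto_norm_cocompact_atTop.eventually_gt_atTop P] with p hp
    have hpv : p * v ≤ |p| * |v| := (le_abs_self _).trans (abs_mul p v).le
    simp only [Function.comp_apply, Real.norm_eq_abs] at hp ⊢
    nlinarith [hP p hp]
  obtain ⟨q, hq⟩ := ((continuous_id.mul continuous_const).sub hH).exists_forall_ge hlim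
  exact ⟨_, forall_mem_range.2 hq⟩

lemma apply_add_intCast_add_intCast {U : ℝ → ℝ → ℝ}
    (hper : ∀ t x : ℝ, U (t + 1) x = U t x ∧ U t (x + 1) = U t x) (k j : ℤ) (t x : ℝ) :
    U (t + k) (x + j) = U t x := by
  have ht : Function.Periodic (fun s => U s (x + j)) 1 := fun s => (hper s _).1
  have hx : Function.Periodic (U t) 1 := fun z => (hper t z).2
  have h₁ := (ht.int_mul k) t
  have h₂ := (hx.int_mul j) x
  simp only [mul_one] at h₁ h₂
  exact h₁.trans h₂

lemma exists_forall_abs_le_of_periodic {U : ℝ → ℝ → ℝ}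
    (hU : Continuous fun q : ℝ × ℝ => U q.1 q.2)
    (hper : ∀ t x : ℝ, U (t + 1) x = U t x ∧ U t (x + 1) = U t x) :
    ∃ M, ∀ t x, |U t x| ≤ M := by
  obtain ⟨M, hM⟩ := (isCompact_Icc.prod isCompact_Icc).exists_bound_of_continuousOn
    (s := Icc (0 : ℝ) 1 ×ˢ Icc (0 : ℝ) 1) hU.continuousOn
  refine ⟨M, fun t x => ?_⟩
  have hfract := apply_add_intCast_add_intCast hper ⌊t⌋ ⌊x⌋ (Int.fract t) (Int.fract x)
  rw [Int.fract_add_floor, Int.fract_add_floor] at hfract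
  rw [hfract]
  exact hM (Int.fract t, Int.fract x)
    ⟨⟨Int.fract_nonneg t, (Int.fract_lt_one t).le⟩, ⟨Int.fract_nonneg x, (Int.fract_lt_one x).le⟩⟩

section Integral

variable {f₁ f₂ : ℝ → ℝ} {s m t : ℝ}

lemma intervalIntegrable_ite_le (hsm : s ≤ m) (hmt : m ≤ t)
    (h₁ : IntervalIntegrable f₁ volume s m) (h₂ : IntervalIntegrable f₂ volume m t) :
    IntervalIntegrable (fun τ => if τ ≤ m then f₁ τ else f₂ τ) volume s t := by
  refine IntervalIntegrable.trans (b := m) (h₁.congr fun τ hτ => ?_) (h₂.congr fun τ hτ => ?_)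
  · rw [uIoc_of_le hsm] at hτ
    simp [hτ.2]
  · rw [uIoc_of_le hmt] at hτ
    simp [not_le.2 hτ.1]

lemma integral_ite_le_s10 (hsm : s ≤ m) (hmt : m ≤ t)
    (h₁ : IntervalIntegrable f₁ volume s m) (h₂ : IntervalIntegrable f₂ volume m t) :
    ∫ τ in s..t, (if τ ≤ m then f₁ τ else f₂ τ) = (∫ τ in s..m, f₁ τ) + ∫ τ in m..t, f₂ τ := by
  have h := intervalIntegrable_ite_le hsm hmt h₁ h₂
  rw [← integral_add_adjacent_intervals (b := m) (h.mono_set (uIcc_subset_uIcc_left ?_))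
    (h.mono_set (uIcc_subset_uIcc_right ?_))]
  · congr 1
    · refine integral_congr_ae (ae_of_all _ fun τ hτ => ?_)
      rw [uIoc_of_le hsm] at hτ
      simp [hτ.2]
    · refine integral_congr_ae (ae_of_all _ fun τ hτ => ?_)
      rw [uIoc_of_le hmt] at hτ
      simp [not_le.2 hτ.1]
  all_goals rw [uIcc_of_le (hsm.trans hmt)]; exact ⟨hsm, hmt⟩

end Integral

def actions (L0 : ℝ → ℝ) (U : ℝ → ℝ → ℝ) (s y t x : ℝ) : Set ℝ :=
  { A | ∃ ξ g : ℝ → ℝ, Admissible s y t x ξ g ∧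
    IntervalIntegrable (fun τ => L0 (g τ) - U τ (ξ τ)) volume s t ∧
    A = ∫ τ in s..t, (L0 (g τ) - U τ (ξ τ)) }

section Actions

variable {L0 : ℝ → ℝ} {U : ℝ → ℝ → ℝ} {s m t y z x A A₁ A₂ : ℝ}

lemma val_eq_sInf_actions : val L0 U s y t x = sInf (actions L0 U s y t x) := rfl

lemma actions_nonempty (hU : Continuous fun q : ℝ × ℝ => U q.1 q.2) (hst : s < t) :
    (actions L0 U s y t x).Nonempty := by
  set v := (x - y) / (t - s)
  have hline : Continuous fun τ => y + (τ - s) * v := by fun_prop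
  refine ⟨_, fun τ => y + (τ - s) * v, fun _ => v, ⟨intervalIntegrable_const, fun r _ => ?_, ?_⟩,
    (continuous_const.sub (hU.comp (continuous_id.prodMk hline))).intervalIntegrable _ _, rfl⟩
  · simp
  · simp only [v]
    field_simp [(sub_pos.2 hst).ne']
    ring

lemma le_of_mem_actions {p c : ℝ} (hlow : ∀ τ z v, p * v - c ≤ L0 v - U τ z) (hst : s ≤ t)
    (hA : A ∈ actions L0 U s y t x) : p * (x - y) - (t - s) * c ≤ A := by
  obtain ⟨ξ, g, ⟨hg, hξ, hξt⟩, hF, rfl⟩ := hA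
  have hdisp : ∫ τ in s..t, g τ = x - y := by
    linarith [hξ t ⟨hst, le_rfl⟩]
  calc p * (x - y) - (t - s) * c = ∫ τ in s..t, (p * g τ - c) := by
        rw [integral_sub (hg.const_mul p) intervalIntegrable_const,
          intervalIntegral.integral_const_mul, hdisp, intervalIntegral.integral_const, smul_eq_mul]
    _ ≤ _ := integral_mono_on hst ((hg.const_mul p).sub intervalIntegrable_const) hF
        fun τ _ => hlow τ (ξ τ) (g τ)

lemma le_val {p c : ℝ} (hlow : ∀ τ z v, p * v - c ≤ L0 v - U τ z)
    (hU : Continuous fun q : ℝ × ℝ => U q.1 q.2) (hst : s < t) :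
    p * (x - y) - (t - s) * c ≤ val L0 U s y t x :=
  le_csInf (actions_nonempty hU hst) fun _ hA => le_of_mem_actions hlow hst.le hA

lemma val_le_of_mem_actions {p c : ℝ} (hlow : ∀ τ z v, p * v - c ≤ L0 v - U τ z) (hst : s ≤ t)
    (hA : A ∈ actions L0 U s y t x) : val L0 U s y t x ≤ A :=
  csInf_le ⟨_, fun _ hB => le_of_mem_actions hlow hst hB⟩ hA

lemma mem_actions_translate {c d : ℝ} (hcd : ∀ τ z, U (τ + c) (z + d) = U τ z)
    (hA : A ∈ actions L0 U s y t x) : A ∈ actions L0 U (s + c) (y + d) (t + c) (x + d) := by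
  obtain ⟨ξ, g, ⟨hg, hξ, hξt⟩, hF, rfl⟩ := hA
  have hlag : (fun τ => L0 (g (τ - c)) - U τ (ξ (τ - c) + d)) =
      fun τ => L0 (g (τ - c)) - U (τ - c) (ξ (τ - c)) := by
    funext τ
    rw [← hcd (τ - c), sub_add_cancel]
  refine ⟨fun τ => ξ (τ - c) + d, fun τ => g (τ - c),
    ⟨by simpa using hg.comp_sub_right c, fun r hr => ?_, by simp [hξt]⟩, ?_, ?_⟩
  · show ξ (r - c) + d = _
    rw [integral_comp_sub_right, add_sub_cancel_right,
      hξ (r - c) ⟨by linarith [hr.1], by linarith [hr.2]⟩]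
    ring
  · rw [hlag]
    simpa using hF.comp_sub_right c
  · rw [hlag, integral_comp_sub_right (fun τ => L0 (g τ) - U τ (ξ τ)), add_sub_cancel_right,
      add_sub_cancel_right]

lemma actions_translate {c d : ℝ} (hcd : ∀ τ z, U (τ + c) (z + d) = U τ z) :
    actions L0 U (s + c) (y + d) (t + c) (x + d) = actions L0 U s y t x := by
  refine Subset.antisymm (fun A hA => ?_) fun A => mem_actions_translate hcd
  have hcd' : ∀ τ z, U (τ + -c) (z + -d) = U τ z := fun τ z => by
    simpa [← sub_eq_add_neg] using (hcd (τ - c) (z - d)).symm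
  simpa using mem_actions_translate hcd' hA

lemma val_translate {c d : ℝ} (hcd : ∀ τ z, U (τ + c) (z + d) = U τ z) :
    val L0 U (s + c) (y + d) (t + c) (x + d) = val L0 U s y t x := by
  rw [val_eq_sInf_actions, val_eq_sInf_actions, actions_translate hcd]

lemma add_mem_actions (hsm : s ≤ m) (hmt : m ≤ t) (h₁ : A₁ ∈ actions L0 U s y m z)
    (h₂ : A₂ ∈ actions L0 U m z t x) : A₁ + A₂ ∈ actions L0 U s y t x := by
  obtain ⟨ξ₁, g₁, ⟨hg₁, hξ₁, hξ₁m⟩, hF₁, rfl⟩ := h₁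
  obtain ⟨ξ₂, g₂, ⟨hg₂, hξ₂, hξ₂t⟩, hF₂, rfl⟩ := h₂
  set g := fun τ => if τ ≤ m then g₁ τ else g₂ τ
  have hz : z = y + ∫ τ in s..m, g₁ τ := hξ₁m ▸ hξ₁ m ⟨hsm, le_rfl⟩
  have hlag : (fun τ => L0 (g τ) - U τ (if τ ≤ m then ξ₁ τ else ξ₂ τ)) = fun τ =>
      if τ ≤ m then L0 (g₁ τ) - U τ (ξ₁ τ) else L0 (g₂ τ) - U τ (ξ₂ τ) := by
    funext τ
    split_ifs <;> simp [g, *]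
  refine ⟨fun τ => if τ ≤ m then ξ₁ τ else ξ₂ τ, g,
    ⟨intervalIntegrable_ite_le hsm hmt hg₁ hg₂, fun r hr => ?_, ?_⟩, ?_, ?_⟩
  · by_cases hrm : r ≤ m
    · simp only [hrm, if_true]
      rw [hξ₁ r ⟨hr.1, hrm⟩]
      refine congrArg _ (integral_congr fun τ hτ => ?_)
      rw [uIcc_of_le hr.1] at hτ
      simp [g, hτ.2.trans hrm]
    · have hmr : m ≤ r := (not_le.1 hrm).le
      simp only [hrm, if_false]
      rw [hξ₂ r ⟨hmr, hr.2⟩, integral_ite_le_s10 hsm hmr hg₁ (hg₂.mono_set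
        (uIcc_subset_uIcc_left (by rw [uIcc_of_le hmt]; exact ⟨hmr, hr.2⟩))), hz]
      ring
  · rcases hmt.eq_or_lt with rfl | hmt'
    · simp [← hξ₁m, ← hξ₂t, hξ₂ m ⟨le_rfl, le_rfl⟩]
    · simp [not_le.2 hmt', hξ₂t]
  · rw [hlag]
    exact intervalIntegrable_ite_le hsm hmt hF₁ hF₂
  · rw [hlag, integral_ite_le_s10 hsm hmt hF₁ hF₂]

lemma exists_mem_actions_add_eq (hsm : s ≤ m) (hmt : m ≤ t) (hA : A ∈ actions L0 U s y t x) :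
    ∃ z, ∃ A₁ ∈ actions L0 U s y m z, ∃ A₂ ∈ actions L0 U m z t x, A = A₁ + A₂ := by
  obtain ⟨ξ, g, ⟨hg, hξ, hξt⟩, hF, rfl⟩ := hA
  have hsub₁ : uIcc s m ⊆ uIcc s t := uIcc_subset_uIcc_left (by
    rw [uIcc_of_le (hsm.trans hmt)]; exact ⟨hsm, hmt⟩)
  have hsub₂ : uIcc m t ⊆ uIcc s t := uIcc_subset_uIcc_right (by
    rw [uIcc_of_le (hsm.trans hmt)]; exact ⟨hsm, hmt⟩)
  refine ⟨ξ m, _, ⟨ξ, g, ⟨hg.mono_set hsub₁, fun r hr => hξ r ⟨hr.1, hr.2.trans hmt⟩, rfl⟩,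
    hF.mono_set hsub₁, rfl⟩, _, ⟨ξ, g, ⟨hg.mono_set hsub₂, fun r hr => ?_, hξt⟩,
    hF.mono_set hsub₂, rfl⟩, (integral_add_adjacent_intervals (hF.mono_set hsub₁)
    (hF.mono_set hsub₂)).symm⟩
  rw [hξ r ⟨hsm.trans hr.1, hr.2⟩, hξ m ⟨hsm, hmt⟩, add_assoc,
    integral_add_adjacent_intervals (hg.mono_set hsub₁) ((hg.mono_set hsub₂).mono_set
      (uIcc_subset_uIcc_left (by rw [uIcc_of_le hmt]; exact hr)))]

lemma val_le_val_add_val {p c : ℝ} (hlow : ∀ τ z v, p * v - c ≤ L0 v - U τ z)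
    (hU : Continuous fun q : ℝ × ℝ => U q.1 q.2) (hsm : s < m) (hmt : m < t) :
    val L0 U s y t x ≤ val L0 U s y m z + val L0 U m z t x := by
  have hglue : ∀ A₁ ∈ actions L0 U s y m z, ∀ A₂ ∈ actions L0 U m z t x,
      val L0 U s y t x - A₁ ≤ A₂ := fun A₁ h₁ A₂ h₂ => by
    linarith [val_le_of_mem_actions hlow (hsm.trans hmt).le (add_mem_actions hsm.le hmt.le h₁ h₂)]
  have hfirst : ∀ A₁ ∈ actions L0 U s y m z, val L0 U s y t x - val L0 U m z t x ≤ A₁ :=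
    fun A₁ h₁ => sub_le_comm.1 (le_csInf (actions_nonempty hU hmt) (hglue A₁ h₁))
  exact sub_le_iff_le_add.1 (le_csInf (actions_nonempty hU hsm) hfirst)

lemma exists_val_add_val_lt {p c ε : ℝ} (hlow : ∀ τ z v, p * v - c ≤ L0 v - U τ z)
    (hU : Continuous fun q : ℝ × ℝ => U q.1 q.2) (hsm : s ≤ m) (hmt : m ≤ t) (hst : s < t)
    (hε : 0 < ε) : ∃ z, val L0 U s y m z + val L0 U m z t x < val L0 U s y t x + ε := by
  obtain ⟨A, hA, hAlt⟩ := exists_lt_of_csInf_lt (actions_nonempty (x := x) (y := y) hU hst)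
    (lt_add_of_pos_right (val L0 U s y t x) hε)
  obtain ⟨z, A₁, h₁, A₂, h₂, rfl⟩ := exists_mem_actions_add_eq hsm hmt hA
  exact ⟨z, by linarith [val_le_of_mem_actions hlow hsm h₁, val_le_of_mem_actions hlow hmt h₂]⟩

end Actions

lemma val_add_intCast {L0 : ℝ → ℝ} {U : ℝ → ℝ → ℝ}
    (hper : ∀ t x : ℝ, U (t + 1) x = U t x ∧ U t (x + 1) = U t x) (k j : ℤ) (s y t x : ℝ) :
    val L0 U (s + k) (y + j) (t + k) (x + j) = val L0 U s y t x :=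
  val_translate (apply_add_intCast_add_intCast hper k j)

lemma val_natCast_add {L0 : ℝ → ℝ} {U : ℝ → ℝ → ℝ}
    (hper : ∀ t x : ℝ, U (t + 1) x = U t x ∧ U t (x + 1) = U t x) (m n : ℕ) (y x : ℝ) :
    val L0 U m y ↑(m + n) x = val L0 U 0 y n x := by
  simpa [add_comm] using val_add_intCast (L0 := L0) hper m 0 0 y n x

section ReducedAction

variable {L0 : ℝ → ℝ} {U : ℝ → ℝ → ℝ} {a c : ℝ} {m n : ℕ} {y z x : ℝ}

lemma neg_mul_le_val_add (hlow : ∀ τ z v, a * v - c ≤ L0 v - U τ z)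
    (hU : Continuous fun q : ℝ × ℝ => U q.1 q.2) (hn : 0 < n) (k : ℤ) :
    -(n * c) ≤ val L0 U 0 (y + k) n x + a * (y + k - x) := by
  have := le_val (y := y + k) (x := x) hlow hU (Nat.cast_pos.2 hn)
  linarith

lemma neg_mul_le_Lan (hlow : ∀ τ z v, a * v - c ≤ L0 v - U τ z)
    (hU : Continuous fun q : ℝ × ℝ => U q.1 q.2) (hn : 0 < n) :
    -(n * c) ≤ Lan L0 U a n y x :=
  le_csInf ⟨_, 0, rfl⟩ fun _ ⟨k, hk⟩ => hk ▸ neg_mul_le_val_add hlow hU hn k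

lemma Lan_le (hlow : ∀ τ z v, a * v - c ≤ L0 v - U τ z)
    (hU : Continuous fun q : ℝ × ℝ => U q.1 q.2) (hn : 0 < n) (k : ℤ) :
    Lan L0 U a n y x ≤ val L0 U 0 (y + k) n x + a * (y + k - x) :=
  csInf_le ⟨_, fun _ ⟨i, hi⟩ => hi ▸ neg_mul_le_val_add hlow hU hn i⟩ ⟨k, rfl⟩

lemma exists_val_add_lt_Lan {ε : ℝ} (hε : 0 < ε) :
    ∃ k : ℤ, val L0 U 0 (y + k) n x + a * (y + k - x) < Lan L0 U a n y x + ε := by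
  obtain ⟨_, ⟨k, rfl⟩, hk⟩ := exists_lt_of_csInf_lt
    (s := { c | ∃ k : ℤ, c = val L0 U 0 (y + k) n x + a * (y + k - x) }) ⟨_, 0, rfl⟩
    (lt_add_of_pos_right (Lan L0 U a n y x) hε)
  exact ⟨k, hk⟩

lemma Lan_add_intCast (hper : ∀ t x : ℝ, U (t + 1) x = U t x ∧ U t (x + 1) = U t x) (j : ℤ) :
    Lan L0 U a n (y + j) (x + j) = Lan L0 U a n y x := by
  have hval : ∀ k : ℤ, val L0 U 0 (y + j + k) n (x + j) = val L0 U 0 (y + k) n x := fun k => by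
    simpa [add_right_comm] using val_add_intCast (L0 := L0) hper 0 j 0 (y + k) n x
  simp only [Lan, hval, show ∀ k : ℤ, y + j + k - (x + j) = y + k - x from fun k => by ring]

lemma Lan_add_le (hlow : ∀ τ z v, a * v - c ≤ L0 v - U τ z)
    (hU : Continuous fun q : ℝ × ℝ => U q.1 q.2)
    (hper : ∀ t x : ℝ, U (t + 1) x = U t x ∧ U t (x + 1) = U t x) (hm : 0 < m) (hn : 0 < n) :
    Lan L0 U a (m + n) y x ≤ Lan L0 U a m y z + Lan L0 U a n z x := by
  refine le_of_forall_pos_lt_add fun ε hε => ?_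
  obtain ⟨k, hk⟩ := exists_val_add_lt_Lan (L0 := L0) (U := U) (a := a) (n := m) (y := y) (x := z)
    (half_pos hε)
  obtain ⟨j, hj⟩ := exists_val_add_lt_Lan (L0 := L0) (U := U) (a := a) (n := n) (y := z) (x := x)
    (half_pos hε)
  have hshift : val L0 U 0 (y + k + j) m (z + j) = val L0 U 0 (y + k) m z := by
    simpa using val_add_intCast (L0 := L0) hper 0 j 0 (y + k) m z
  have hglue := val_le_val_add_val (y := y + k + j) (z := z + j) (x := x) hlow hU
    (Nat.cast_pos.2 hm) (Nat.cast_lt.2 (Nat.lt_add_of_pos_right hn))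
  have hLan := Lan_le (y := y) (x := x) hlow hU (Nat.add_pos_left hm n) (k + j)
  rw [hshift, val_natCast_add hper] at hglue
  push_cast at hLan hglue
  rw [← add_assoc] at hLan
  linarith

lemma exists_Lan_add_Lan_lt (hlow : ∀ τ z v, a * v - c ≤ L0 v - U τ z)
    (hU : Continuous fun q : ℝ × ℝ => U q.1 q.2)
    (hper : ∀ t x : ℝ, U (t + 1) x = U t x ∧ U t (x + 1) = U t x) (hm : 0 < m) (hn : 0 < n)
    {ε : ℝ} (hε : 0 < ε) :
    ∃ z, Lan L0 U a m y z + Lan L0 U a n z x < Lan L0 U a (m + n) y x + ε := by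
  obtain ⟨k, hk⟩ := exists_val_add_lt_Lan (L0 := L0) (U := U) (a := a) (n := m + n) (y := y)
    (x := x) (half_pos hε)
  obtain ⟨z, hz⟩ := exists_val_add_val_lt (y := y + k) (x := x) (m := m) hlow hU (Nat.cast_nonneg m)
    (Nat.cast_le.2 (Nat.le_add_right m n)) (Nat.cast_pos.2 (Nat.add_pos_left hm n)) (half_pos hε)
  rw [val_natCast_add hper] at hz
  have h₁ := Lan_le (y := y) (x := z) hlow hU hm k
  have h₂ := Lan_le (y := z) (x := x) hlow hU hn 0
  simp only [Int.cast_zero, add_zero] at h₂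
  exact ⟨z, by linarith⟩

end ReducedAction

section TwoPointInfimum

variable {f g h : ℝ → ℝ → ℝ}

lemma iInf_add_iInf_le_iInf (hf : BddBelow (range fun p : ℝ × ℝ => f p.1 p.2))
    (hg : BddBelow (range fun p : ℝ × ℝ => g p.1 p.2))
    (hsplit : ∀ y x, ∀ ε > 0, ∃ z, f y z + g z x < h y x + ε) :
    (⨅ p : ℝ × ℝ, f p.1 p.2) + (⨅ p : ℝ × ℝ, g p.1 p.2) ≤ ⨅ p : ℝ × ℝ, h p.1 p.2 := by
  refine le_ciInf fun p => le_of_forall_pos_lt_add fun ε hε => ?_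
  obtain ⟨z, hz⟩ := hsplit p.1 p.2 ε hε
  linarith [ciInf_le hf (p.1, z), ciInf_le hg (z, p.2)]

lemma iInf_le_iInf_add_iInf_add {C : ℝ} (hh : BddBelow (range fun p : ℝ × ℝ => h p.1 p.2))
    (hchain : ∀ y z x, h y x ≤ f y z + g z x) (hg : ∀ y x (k : ℤ), g (y + k) (x + k) = g y x)
    (hf : ∀ y x₁ x₂, |f y x₁ - f y x₂| ≤ C * |x₁ - x₂|) (hC : 0 ≤ C) :
    ⨅ p : ℝ × ℝ, h p.1 p.2 ≤ (⨅ p : ℝ × ℝ, f p.1 p.2) + (⨅ p : ℝ × ℝ, g p.1 p.2) + C := by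
  -- an integer shift moves the start of a `g`-path to within distance 1 of the end of an `f`-path
  have hjoin : ∀ y z y' x', ⨅ p : ℝ × ℝ, h p.1 p.2 ≤ f y z + g y' x' + C := fun y z y' x' => by
    set k := round (z - y')
    have hk : |y' + k - z| ≤ 1 := by
      have := abs_sub_round (z - y')
      rw [abs_sub_comm, show (k : ℝ) - (z - y') = y' + k - z by ring] at this
      linarith
    calc ⨅ p : ℝ × ℝ, h p.1 p.2 ≤ h y (x' + k) := ciInf_le hh (y, x' + k)
      _ ≤ f y (y' + k) + g y' x' := hg y' x' k ▸ hchain y (y' + k) (x' + k)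
      _ ≤ f y z + g y' x' + C := by
        linarith [(abs_le.1 (hf y (y' + k) z)).2, mul_le_mul_of_nonneg_left hk hC]
  have hf' : ∀ y' x', (⨅ p : ℝ × ℝ, h p.1 p.2) - C - g y' x' ≤ ⨅ p : ℝ × ℝ, f p.1 p.2 :=
    fun y' x' => le_ciInf fun p => by linarith [hjoin p.1 p.2 y' x']
  have hg' : (⨅ p : ℝ × ℝ, h p.1 p.2) - C - ⨅ p : ℝ × ℝ, f p.1 p.2 ≤ ⨅ p : ℝ × ℝ, g p.1 p.2 :=
    le_ciInf fun p => by linarith [hf' p.1 p.2]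
  linarith

end TwoPointInfimum

lemma Hn_eq_neg_div_mul_iInf (L0 : ℝ → ℝ) (U : ℝ → ℝ → ℝ) (a : ℝ) (n : ℕ) :
    Hn L0 U a n = -(1 / (n : ℝ)) * ⨅ p : ℝ × ℝ, Lan L0 U a n p.1 p.2 := by
  rw [← smul_eq_mul, Real.smul_iInf_of_nonpos (by simp [one_div, inv_nonneg]), Hn, iSup]
  congr 1
  ext h
  simp [eq_comm]

lemma abs_mul_Hn_add_sub_le {L0 : ℝ → ℝ} {U : ℝ → ℝ → ℝ} {a c C : ℝ}
    (hlow : ∀ τ z v, a * v - c ≤ L0 v - U τ z) (hU : Continuous fun q : ℝ × ℝ => U q.1 q.2)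
    (hper : ∀ t x : ℝ, U (t + 1) x = U t x ∧ U t (x + 1) = U t x) (hC : 0 ≤ C)
    (hLip : ∀ n : ℕ, 0 < n → ∀ y x₁ x₂ : ℝ,
      |Lan L0 U a n y x₁ - Lan L0 U a n y x₂| ≤ C * |x₁ - x₂|) (m n : ℕ) :
    |((m + n : ℕ) : ℝ) * Hn L0 U a (m + n) - m * Hn L0 U a m - n * Hn L0 U a n| ≤ C := by
  rcases Nat.eq_zero_or_pos m with rfl | hm
  · simpa using hC
  rcases Nat.eq_zero_or_pos n with rfl | hn
  · simpa using hC
  have hbdd : ∀ n, 0 < n → BddBelow (range fun p : ℝ × ℝ => Lan L0 U a n p.1 p.2) :=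
    fun n hn => ⟨_, forall_mem_range.2 fun _ => neg_mul_le_Lan hlow hU hn⟩
  have hsuper := iInf_add_iInf_le_iInf (h := Lan L0 U a (m + n)) (hbdd m hm) (hbdd n hn)
    fun _ _ _ hε => exists_Lan_add_Lan_lt hlow hU hper hm hn hε
  have hsub := iInf_le_iInf_add_iInf_add (f := Lan L0 U a m) (g := Lan L0 U a n)
    (hbdd _ (Nat.add_pos_left hm n))
    (fun _ _ _ => Lan_add_le hlow hU hper hm hn) (fun _ _ k => Lan_add_intCast hper k)
    (hLip m hm) hC
  have hmul : ∀ k : ℕ, 0 < k → (k : ℝ) * Hn L0 U a k = -⨅ p : ℝ × ℝ, Lan L0 U a k p.1 p.2 :=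
    fun k hk => by
      rw [Hn_eq_neg_div_mul_iInf]
      field_simp [(Nat.cast_pos.2 hk).ne']
  rw [hmul _ (Nat.add_pos_left hm n), hmul m hm, hmul n hn, abs_le]
  constructor <;> linarith

theorem Hn_converges_general
    (H0 L0 : ℝ → ℝ) (U : ℝ → ℝ → ℝ) (a Cstar : ℝ)
    (hH0 : ContDiff ℝ 1 H0)
    (hsup : ∀ N > (0 : ℝ), ∃ P > (0 : ℝ), ∀ p : ℝ, P < |p| → N * |p| < H0 p)
    (hU : ContDiff ℝ 1 fun q : ℝ × ℝ => U q.1 q.2)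
    (hper : ∀ t x : ℝ, U (t + 1) x = U t x ∧ U t (x + 1) = U t x)
    (hL0 : ∀ v : ℝ, L0 v = sSup (Set.range fun p : ℝ => p * v - H0 p))
    (hCpos : 0 < Cstar)
    (hLip : ∀ n : ℕ, 0 < n → ∀ y x₁ x₂ : ℝ,
      |Lan L0 U a n y x₁ - Lan L0 U a n y x₂| ≤ Cstar * |x₁ - x₂|) :
    (∀ n₀ n : ℕ, 0 < n₀ → n₀ < n →
      |(n : ℝ) * Hn L0 U a n - (n₀ : ℝ) * Hn L0 U a n₀ -
        ((n : ℝ) - (n₀ : ℝ)) * Hn L0 U a (n - n₀)| ≤ Cstar) ∧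
    ∃ Ha : ℝ, ∀ n : ℕ, 0 < n → |Hn L0 U a n - Ha| ≤ Cstar / (n : ℝ) := by
  obtain ⟨M, hM⟩ := exists_forall_abs_le_of_periodic hU.continuous hper
  have hlow : ∀ τ z v, a * v - (H0 a + M) ≤ L0 v - U τ z := fun τ z v => by
    have := le_csSup (bddAbove_range_mul_sub hH0.continuous hsup v) (mem_range_self a)
    rw [← hL0] at this
    linarith [(abs_le.1 (hM τ z)).2]
  have hadd := abs_mul_Hn_add_sub_le hlow hU.continuous hper hCpos.le hLip
  refine ⟨fun n₀ n _ hlt => ?_, ?_⟩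
  · simpa [Nat.cast_sub hlt.le, Nat.add_sub_cancel' hlt.le] using hadd n₀ (n - n₀)
  · obtain ⟨L, hL⟩ := exists_abs_div_sub_le_of_abs_add_sub_le (f := fun n => n * Hn L0 U a n) hadd
    refine ⟨L, fun n hn => ?_⟩
    simpa [mul_div_cancel_left₀ _ (Nat.cast_ne_zero.2 hn.ne' : (n : ℝ) ≠ 0)] using hL n hn

/-- The sequence `n·Hₙ(a)` is approximately sub/superadditive:
`|n·Hₙ(a) − n₀·H_{n₀}(a) − (n−n₀)·H_{n−n₀}(a)| ≤ C*(a)` for `0 < n₀ < n`, and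
consequently `Hₙ(a)` converges to a limit `H(a)` with `|Hₙ(a) − H(a)| ≤ C*(a)/n`. -/
theorem Hn_converges
    (H0 L0 : ℝ → ℝ) (U : ℝ → ℝ → ℝ) (a Cstar : ℝ)
    (hH0 : ContDiff ℝ 1 H0)
    (hmono : StrictMono (deriv H0))
    (hloc : ∀ P > (0 : ℝ), ∃ C > (0 : ℝ), ∀ p₁ ∈ Set.Icc (-P) P, ∀ p₂ ∈ Set.Icc (-P) P,
      |deriv H0 p₁ - deriv H0 p₂| ≤ C * |p₁ - p₂|)
    (hsup : ∀ N > (0 : ℝ), ∃ P > (0 : ℝ), ∀ p : ℝ, P < |p| → N * |p| < H0 p)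
    (hU : ContDiff ℝ 1 fun q : ℝ × ℝ => U q.1 q.2)
    (hUx : ∃ C > (0 : ℝ), ∀ t x₁ x₂ : ℝ, |deriv (U t) x₁ - deriv (U t) x₂| ≤ C * |x₁ - x₂|)
    (hper : ∀ t x : ℝ, U (t + 1) x = U t x ∧ U t (x + 1) = U t x)
    (hL0 : ∀ v : ℝ, L0 v = sSup (Set.range fun p : ℝ => p * v - H0 p))
    (hCpos : 0 < Cstar)
    (hLip : ∀ n : ℕ, 0 < n → ∀ y x₁ x₂ : ℝ,
      |Lan L0 U a n y x₁ - Lan L0 U a n y x₂| ≤ Cstar * |x₁ - x₂|) :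
    (∀ n₀ n : ℕ, 0 < n₀ → n₀ < n →
      |(n : ℝ) * Hn L0 U a n - (n₀ : ℝ) * Hn L0 U a n₀ -
        ((n : ℝ) - (n₀ : ℝ)) * Hn L0 U a (n - n₀)| ≤ Cstar) ∧
    ∃ Ha : ℝ, ∀ n : ℕ, 0 < n → |Hn L0 U a n - Ha| ≤ Cstar / (n : ℝ) :=
  Hn_converges_general H0 L0 U a Cstar hH0 hsup hU hper hL0 hCpos hLip
end

section
/- Let x ∈ M^a and define the backward orbit xₖ = (Y^a)^{−k}(x) for k ∈ ℤ. Then {xₖ} is an L_a-minimal configuration: for all N₁ < N₂ and any finite sequence y_{N₁},…,y_{N₂} with y_{N₁} = x_{N₁} and y_{N₂} = x_{N₂}, Σ_{j=N₁}^{N₂−1} L_a(x_j, x_{j+1}) ≤ Σ_{j=N₁}^{N₂−1} L_a(y_j, y_{j+1}). -/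
open MeasureTheory

/-- `L_a(y,x) = L(0,y;1,x) + a(y−x) + H(a)`. -/
noncomputable def La (L0 : ℝ → ℝ) (U : ℝ → ℝ → ℝ) (a Ha : ℝ) (y x : ℝ) : ℝ :=
  val L0 U 0 y 1 x + a * (y - x) + Ha

/-- The many-valued map `Y^a(x) = argmin_y (s^a(y) + L_a(y,x))`. -/
def Ya (L0 : ℝ → ℝ) (U : ℝ → ℝ → ℝ) (a Ha : ℝ) (sa : ℝ → ℝ) (x : ℝ) : Set ℝ :=
  { y | ∀ z : ℝ, sa y + La L0 U a Ha y x ≤ sa z + La L0 U a Ha z x }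

/-- `M₀ = ℝ`, `Mₙ = Y^a(M_{n−1})`. -/
def Mseq (L0 : ℝ → ℝ) (U : ℝ → ℝ → ℝ) (a Ha : ℝ) (sa : ℝ → ℝ) : ℕ → Set ℝ
  | 0 => Set.univ
  | n + 1 => ⋃ x ∈ Mseq L0 U a Ha sa n, Ya L0 U a Ha sa x

/-! Calibration: every `y ∈ Y^a(x)` satisfies `s^a(x) = s^a(y) + L_a(y,x)`, so along the backward
orbit the cost of a segment telescopes to the increment of `s^a`; since `s^a(x) ≤ s^a(y) + L_a(y,x)`
for all `y`, any other chain with the same endpoints costs at least that increment. -/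

theorem Int.sum_Ico_sub {G : Type*} [AddCommGroup G] (f : ℤ → G) {m n : ℤ}
    (hmn : m ≤ n) : ∑ j ∈ Finset.Ico m n, (f (j + 1) - f j) = f n - f m := by
  induction n, hmn using Int.leInduction with
  | base => simp
  | succ n hmn ih =>
    rw [← Finset.sum_Ico_add_eq_sum_Ico_add_one hmn, ih]
    abel

def IsMinimalConfiguration {α : Type*} (L : α → α → ℝ) (X : ℤ → α) : Prop :=
  ∀ N₁ N₂ : ℤ, N₁ < N₂ → ∀ Y : ℤ → α, Y N₁ = X N₁ → Y N₂ = X N₂ →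
    ∑ j ∈ Finset.Ico N₁ N₂, L (X j) (X (j + 1)) ≤ ∑ j ∈ Finset.Ico N₁ N₂, L (Y j) (Y (j + 1))

section Calibration

variable {α : Type*} {L : α → α → ℝ} {s : α → ℝ}

theorem sub_le_sum_Ico_of_subsolution (hs : ∀ y x, s x ≤ s y + L y x) (Y : ℤ → α)
    {N₁ N₂ : ℤ} (h : N₁ ≤ N₂) :
    s (Y N₂) - s (Y N₁) ≤ ∑ j ∈ Finset.Ico N₁ N₂, L (Y j) (Y (j + 1)) := by
  calc s (Y N₂) - s (Y N₁) = ∑ j ∈ Finset.Ico N₁ N₂, (s (Y (j + 1)) - s (Y j)) :=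
        (Int.sum_Ico_sub (fun j => s (Y j)) h).symm
    _ ≤ ∑ j ∈ Finset.Ico N₁ N₂, L (Y j) (Y (j + 1)) :=
        Finset.sum_le_sum fun j _ => sub_le_iff_le_add'.2 (hs (Y j) (Y (j + 1)))

theorem sum_Ico_eq_sub_of_calibrated {X : ℤ → α}
    (hX : ∀ k, s (X (k + 1)) = s (X k) + L (X k) (X (k + 1))) {N₁ N₂ : ℤ} (h : N₁ ≤ N₂) :
    ∑ j ∈ Finset.Ico N₁ N₂, L (X j) (X (j + 1)) = s (X N₂) - s (X N₁) := by
  calc ∑ j ∈ Finset.Ico N₁ N₂, L (X j) (X (j + 1))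
      = ∑ j ∈ Finset.Ico N₁ N₂, (s (X (j + 1)) - s (X j)) :=
        Finset.sum_congr rfl fun j _ => eq_sub_of_add_eq' (hX j).symm
    _ = s (X N₂) - s (X N₁) := Int.sum_Ico_sub (fun j => s (X j)) h

theorem isMinimalConfiguration_of_calibrated (hs : ∀ y x, s x ≤ s y + L y x) {X : ℤ → α}
    (hX : ∀ k, s (X (k + 1)) = s (X k) + L (X k) (X (k + 1))) :
    IsMinimalConfiguration L X := by
  intro N₁ N₂ hN Y h₁ h₂
  calc ∑ j ∈ Finset.Ico N₁ N₂, L (X j) (X (j + 1))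
      = s (Y N₂) - s (Y N₁) := by rw [sum_Ico_eq_sub_of_calibrated hX hN.le, h₁, h₂]
    _ ≤ ∑ j ∈ Finset.Ico N₁ N₂, L (Y j) (Y (j + 1)) :=
      sub_le_sum_Ico_of_subsolution hs Y hN.le

end Calibration

section Ya

variable {L0 : ℝ → ℝ} {U : ℝ → ℝ → ℝ} {a Ha : ℝ} {sa : ℝ → ℝ}

theorem le_add_La_of_isLeast
    (hfe : ∀ x : ℝ, IsLeast { c | ∃ y : ℝ, c = sa y + La L0 U a Ha y x } (sa x)) (y x : ℝ) :
    sa x ≤ sa y + La L0 U a Ha y x :=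
  (hfe x).2 ⟨y, rfl⟩

theorem eq_add_La_of_mem_Ya
    (hfe : ∀ x : ℝ, IsLeast { c | ∃ y : ℝ, c = sa y + La L0 U a Ha y x } (sa x)) {y x : ℝ}
    (hy : y ∈ Ya L0 U a Ha sa x) : sa x = sa y + La L0 U a Ha y x := by
  obtain ⟨z, hz⟩ := (hfe x).1
  exact le_antisymm (le_add_La_of_isLeast hfe y x) (hz ▸ hy z)

end Ya

theorem backward_orbit_minimal_general
    (L0 : ℝ → ℝ) (U : ℝ → ℝ → ℝ) (a Ha : ℝ) (sa : ℝ → ℝ)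
    (hfe : ∀ x : ℝ, IsLeast { c | ∃ y : ℝ, c = sa y + La L0 U a Ha y x } (sa x))
    (X : ℤ → ℝ)
    (hXrel : ∀ k : ℤ, X k ∈ Ya L0 U a Ha sa (X (k + 1))) :
    ∀ N₁ N₂ : ℤ, N₁ < N₂ → ∀ Y : ℤ → ℝ, Y N₁ = X N₁ → Y N₂ = X N₂ →
      ∑ j ∈ Finset.Ico N₁ N₂, La L0 U a Ha (X j) (X (j + 1)) ≤
        ∑ j ∈ Finset.Ico N₁ N₂, La L0 U a Ha (Y j) (Y (j + 1)) :=
  isMinimalConfiguration_of_calibrated (le_add_La_of_isLeast hfe)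
    fun k => eq_add_La_of_mem_Ya hfe (hXrel k)

/-- A backward orbit `xₖ = (Y^a)^{−k}(x)` of a point `x ∈ M^a` (encoded
by `X k ∈ Y^a(X (k+1))`, `X k ∈ M^a`) is an `L_a`-minimal configuration: for all
`N₁ < N₂` and any sequence `y` with the same endpoints,
`Σ_{j=N₁}^{N₂−1} L_a(x_j, x_{j+1}) ≤ Σ_{j=N₁}^{N₂−1} L_a(y_j, y_{j+1})`. -/
theorem backward_orbit_minimal
    (H0 L0 : ℝ → ℝ) (U : ℝ → ℝ → ℝ) (a Ha : ℝ) (sa : ℝ → ℝ)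
    (hH0 : ContDiff ℝ 1 H0)
    (hmono : StrictMono (deriv H0))
    (hloc : ∀ P > (0 : ℝ), ∃ C > (0 : ℝ), ∀ p₁ ∈ Set.Icc (-P) P, ∀ p₂ ∈ Set.Icc (-P) P,
      |deriv H0 p₁ - deriv H0 p₂| ≤ C * |p₁ - p₂|)
    (hsup : ∀ N > (0 : ℝ), ∃ P > (0 : ℝ), ∀ p : ℝ, P < |p| → N * |p| < H0 p)
    (hU : ContDiff ℝ 1 fun q : ℝ × ℝ => U q.1 q.2)
    (hUx : ∃ C > (0 : ℝ), ∀ t x₁ x₂ : ℝ, |deriv (U t) x₁ - deriv (U t) x₂| ≤ C * |x₁ - x₂|)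
    (hper : ∀ t x : ℝ, U (t + 1) x = U t x ∧ U t (x + 1) = U t x)
    (hL0 : ∀ v : ℝ, L0 v = sSup (Set.range fun p : ℝ => p * v - H0 p))
    (hsa : Continuous sa) (hsaper : ∀ x : ℝ, sa (x + 1) = sa x)
    (hfe : ∀ x : ℝ, IsLeast { c | ∃ y : ℝ, c = sa y + La L0 U a Ha y x } (sa x))
    (X : ℤ → ℝ)
    (hXM : ∀ k : ℤ, X k ∈ ⋂ n : ℕ, Mseq L0 U a Ha sa n)
    (hXrel : ∀ k : ℤ, X k ∈ Ya L0 U a Ha sa (X (k + 1))) :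
    ∀ N₁ N₂ : ℤ, N₁ < N₂ → ∀ Y : ℤ → ℝ, Y N₁ = X N₁ → Y N₂ = X N₂ →
      ∑ j ∈ Finset.Ico N₁ N₂, La L0 U a Ha (X j) (X (j + 1)) ≤
        ∑ j ∈ Finset.Ico N₁ N₂, La L0 U a Ha (Y j) (Y (j + 1)) :=
  backward_orbit_minimal_general L0 U a Ha sa hfe X hXrel
end
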